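/- The total number of right-to-left minima summed over all flattened permutations of {1,...,n} equals the Bell number B(n) for appropriate indexing; specifically, Σ_{π flattened of length n} rlm(π) = Σ_{k≥1} k·S(n−1,k−1) = B(n−1) + Σ_{k≥0} k·S(n−1,k) for n ≥ 1. -/

import Mathlib

open Finset

/-- `ℓ` is a valley of `π`: `2 ≤ ℓ ≤ n-1` (1-based) with `π(ℓ-1) > π(ℓ) < π(ℓ+1)`. -/
def IsValley {n : ℕ} (π : Equiv.Perm (Fin n)) (ℓ : Fin n) : Prop :=
  1 ≤ ℓ.val ∧ ∃ h2 : ℓ.val + 1 < n,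
    π ⟨ℓ.val - 1, lt_of_le_of_lt (Nat.sub_le _ _) ℓ.isLt⟩ > π ℓ ∧ π ℓ < π ⟨ℓ.val + 1, h2⟩

/-- number of valleys of `π` -/
noncomputable def valCount {n : ℕ} (π : Equiv.Perm (Fin n)) : ℕ :=
  {ℓ : Fin n | IsValley π ℓ}.ncard

/-- `ℓ` is a peak of `π`. -/
def IsPeak {n : ℕ} (π : Equiv.Perm (Fin n)) (ℓ : Fin n) : Prop :=
  1 ≤ ℓ.val ∧ ∃ h2 : ℓ.val + 1 < n,
    π ⟨ℓ.val - 1, lt_of_le_of_lt (Nat.sub_le _ _) ℓ.isLt⟩ < π ℓ ∧ π ℓ > π ⟨ℓ.val + 1, h2⟩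

/-- number of peaks of `π` -/
noncomputable def peakCount {n : ℕ} (π : Equiv.Perm (Fin n)) : ℕ :=
  {ℓ : Fin n | IsPeak π ℓ}.ncard

/-- number of descents of `π` -/
noncomputable def desCount {n : ℕ} (π : Equiv.Perm (Fin n)) : ℕ :=
  {ℓ : Fin n | ∃ h : ℓ.val + 1 < n, π ⟨ℓ.val + 1, h⟩ < π ℓ}.ncard

/-- `π` is increasing: the values at its valleys, from left to right, strictly increase. -/
def Increasing {n : ℕ} (π : Equiv.Perm (Fin n)) : Prop :=
  ∀ i j : Fin n, IsValley π i → IsValley π j → i < j → π i < π j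

/-- `ℓ` is the first position of a (maximal increasing) run of `π`. -/
def IsRunStart {n : ℕ} (π : Equiv.Perm (Fin n)) (ℓ : Fin n) : Prop :=
  ℓ.val = 0 ∨ π ⟨ℓ.val - 1, lt_of_le_of_lt (Nat.sub_le _ _) ℓ.isLt⟩ > π ℓ

/-- number of (maximal increasing) runs of `π` -/
noncomputable def runCount {n : ℕ} (π : Equiv.Perm (Fin n)) : ℕ :=
  {ℓ : Fin n | IsRunStart π ℓ}.ncard

/-- `π` is flattened: the first entries of its runs, from left to right, increase. -/
def Flattened {n : ℕ} (π : Equiv.Perm (Fin n)) : Prop :=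
  ∀ i j : Fin n, IsRunStart π i → IsRunStart π j → i < j → π i < π j

/-- `π i` is a right-to-left minimum of `π`. -/
def IsRLMin {n : ℕ} (π : Equiv.Perm (Fin n)) (i : Fin n) : Prop :=
  ∀ j : Fin n, i < j → π i < π j

/-- number of right-to-left minima of `π` -/
noncomputable def rlmCount {n : ℕ} (π : Equiv.Perm (Fin n)) : ℕ :=
  {i : Fin n | IsRLMin π i}.ncard

/-- Stirling numbers of the second kind. -/
def stirling2 : ℕ → ℕ → ℕ
  | 0, 0 => 1
  | 0, _+1 => 0
  | _+1, 0 => 0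
  | n+1, k+1 => (k+1) * stirling2 n (k+1) + stirling2 n k

/-- Bell number: the number of set partitions of an `m`-element set. -/
noncomputable def bell (m : ℕ) : ℕ :=
  Nat.card (Finpartition (Finset.univ : Finset (Fin m)))

/-!
A permutation is flattened exactly when each of its run starts is a right-to-left minimum: run
starts increase from left to right, and every entry is at least the start of its own run.
Inserting the new largest value `m` into a permutation `σ` of `Fin m` therefore gives a flattened
permutation in exactly two kinds of places: at the end, which adds one right-to-left minimum, or
immediately before one of the right-to-left minima of a flattened `σ` other than its first entry,
which leaves their number unchanged. So the number of flattened permutations of `Fin (m + 1)` with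
`r + 1` right-to-left minima obeys the recurrence of the Stirling number `S(m, r)`.

For the second identity, `B(m) = ∑ₖ S(m, k)` with `S(m, k)` counting the partitions of an
`m`-element set into `k` blocks: a partition of `insert a t` is the same as a partition of `t`
together with a choice of where `a` goes, either into a new singleton block or into one of the
existing blocks.
-/

theorem Finset.insert_inter_eq_of_subset {α : Type*} [DecidableEq α] {a : α} {b t : Finset α}
    (ha : a ∉ t) (hbt : b ⊆ t) : insert a b ∩ t = b := by
  rw [insert_inter_of_notMem ha, inter_eq_left.2 hbt]

namespace Finpartition

variable {α : Type*} [DecidableEq α] {a : α} {t : Finset α}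

theorem subset_of_mem_insert_empty (Q : Finpartition t) {b : Finset α}
    (hb : b ∈ insert ∅ Q.parts) : b ⊆ t := by
  rcases mem_insert.1 hb with rfl | hb
  exacts [empty_subset t, Q.le hb]

theorem sup_erase_parts (Q : Finpartition t) {b : Finset α} (hb : b ∈ insert ∅ Q.parts) :
    (Q.parts.erase b).sup id = t \ b := by
  ext x
  simp only [mem_sup, mem_erase, id, mem_sdiff]
  constructor
  · rintro ⟨c, ⟨hcb, hc⟩, hxc⟩
    refine ⟨Q.le hc hxc, fun hxb => hcb ?_⟩
    rcases mem_insert.1 hb with rfl | hb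
    · exact absurd hxb (notMem_empty x)
    · exact Q.eq_of_mem_parts hc hb hxc hxb
  · rintro ⟨hxt, hxb⟩
    exact ⟨Q.part x, ⟨fun h => hxb (h ▸ Q.mem_part_self.2 hxt), Q.part_mem.2 hxt⟩,
      Q.mem_part_self.2 hxt⟩

/-- Adds `a` to the block `b` of `Q`; for `b = ∅` it makes `{a}` a new block. -/
def insertIntoPart (Q : Finpartition t) (ha : a ∉ t) (b : Finset α)
    (hb : b ∈ insert ∅ Q.parts) : Finpartition (insert a t) :=
  (Q.ofSubset (erase_subset b Q.parts) (Q.sup_erase_parts hb)).extend (insert_ne_empty a b)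
    (disjoint_insert_right.2 ⟨fun h => ha (mem_sdiff.1 h).1, sdiff_disjoint⟩)
    (by rw [sup_eq_union, union_insert, sdiff_union_of_subset (Q.subset_of_mem_insert_empty hb)])

section InsertIntoPart

variable (Q : Finpartition t) (ha : a ∉ t) {b : Finset α} (hb : b ∈ insert ∅ Q.parts)

theorem parts_insertIntoPart :
    (Q.insertIntoPart ha b hb).parts = insert (insert a b) (Q.parts.erase b) := rfl

theorem card_parts_insertIntoPart :
    #(Q.insertIntoPart ha b hb).parts = #Q.parts + if b = ∅ then 1 else 0 := by
  rw [insertIntoPart, card_extend, ofSubset_parts]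
  split_ifs with hb0
  · rw [hb0, erase_eq_of_notMem Q.empty_notMem_parts]
  · have hbQ : b ∈ Q.parts := (mem_insert.1 hb).resolve_left hb0
    have := card_pos.2 ⟨b, hbQ⟩
    rw [card_erase_of_mem hbQ]
    omega

theorem part_insertIntoPart_inter : (Q.insertIntoPart ha b hb).part a ∩ t = b := by
  rw [part_eq_of_mem _ (by simp [parts_insertIntoPart]) (mem_insert_self a b),
    insert_inter_eq_of_subset ha (Q.subset_of_mem_insert_empty hb)]

theorem restrict_insertIntoPart :
    (Q.insertIntoPart ha b hb).restrict (subset_insert a t) = Q := by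
  have hQt : ∀ d ∈ Q.parts, d ∩ t = d := fun d hd => inter_eq_left.2 (Q.le hd)
  ext c
  simp only [restrict, inf_eq_inter', parts_insertIntoPart, image_insert, bot_eq_empty, mem_erase,
    ne_eq, mem_insert, mem_image]
  rw [insert_inter_eq_of_subset ha (Q.subset_of_mem_insert_empty hb)]
  constructor
  · rintro ⟨hc, rfl | ⟨d, ⟨-, hd⟩, rfl⟩⟩
    · exact (mem_insert.1 hb).resolve_left hc
    · rwa [hQt d hd]
  · intro hc
    refine ⟨Q.ne_empty hc, ?_⟩
    by_cases hcb : c = b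
    · exact Or.inl hcb
    · exact Or.inr ⟨c, ⟨hcb, hc⟩, hQt c hc⟩

end InsertIntoPart

section Restrict

variable (R : Finpartition (insert a t))

theorem part_inter_mem_insert_restrict :
    R.part a ∩ t ∈ insert ∅ (R.restrict (subset_insert a t)).parts := by
  by_cases h : R.part a ∩ t = ∅
  · exact h ▸ mem_insert_self _ _
  · exact mem_insert_of_mem
      (mem_erase.2 ⟨h, mem_image_of_mem _ (R.part_mem.2 (mem_insert_self a t))⟩)

theorem insertIntoPart_restrict (ha : a ∉ t) :
    (R.restrict (subset_insert a t)).insertIntoPart ha (R.part a ∩ t)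
      R.part_inter_mem_insert_restrict = R := by
  have haB : a ∈ R.part a := R.mem_part_self.2 (mem_insert_self a t)
  have hB : R.part a ∈ R.parts := R.part_mem.2 (mem_insert_self a t)
  have hinsert : insert a (R.part a ∩ t) = R.part a := by
    rw [insert_inter_distrib, insert_eq_of_mem haB, inter_eq_left.2 (R.part_subset a)]
  have hdt : ∀ d ∈ R.parts, d ≠ R.part a → d ∩ t = d := fun d hd hne =>
    inter_eq_left.2 fun x hx => (mem_insert.1 (R.le hd hx)).resolve_left <| by
      rintro rfl
      exact hne (R.eq_of_mem_parts hd hB hx haB)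
  ext c
  simp only [restrict, inf_eq_inter', bot_eq_empty, parts_insertIntoPart, mem_insert, mem_erase,
    ne_eq, mem_image]
  rw [hinsert]
  constructor
  · rintro (rfl | ⟨hc, -, d, hd, rfl⟩)
    · exact hB
    · by_cases hdB : d = R.part a
      · exact absurd (hdB ▸ rfl) hc
      · rwa [hdt d hd hdB]
  · intro hc
    by_cases hcB : c = R.part a
    · exact Or.inl hcB
    · refine Or.inr ⟨fun h => hcB ?_, R.ne_empty hc, c, hc, hdt c hc hcB⟩
      obtain ⟨x, hx⟩ := R.nonempty_of_mem_parts hc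
      exact R.eq_of_mem_parts hc hB hx (inter_subset_left (h ▸ hx))

end Restrict

theorem card_filter_card_parts_insert (ha : a ∉ t) (k : ℕ) :
    #{R : Finpartition (insert a t) | #R.parts = k + 1} =
      (k + 1) * #{Q : Finpartition t | #Q.parts = k + 1} +
        #{Q : Finpartition t | #Q.parts = k} := by
  have hcount (Q : Finpartition t) :
      #{b ∈ insert ∅ Q.parts | #Q.parts + (if b = ∅ then 1 else 0) = k + 1} =
        (if #Q.parts = k + 1 then k + 1 else 0) + if #Q.parts = k then 1 else 0 := by
    rw [card_filter, sum_insert Q.empty_notMem_parts,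
      sum_congr rfl fun b hb => by rw [if_neg (Q.ne_empty hb), add_zero], sum_const, smul_eq_mul]
    split_ifs <;> simp_all
  calc #{R : Finpartition (insert a t) | #R.parts = k + 1}
      = #(univ.sigma fun Q : Finpartition t =>
          {b ∈ insert ∅ Q.parts | #Q.parts + (if b = ∅ then 1 else 0) = k + 1}) := by
        refine card_bij' (fun R _ => ⟨R.restrict (subset_insert a t), R.part a ∩ t⟩)
          (fun x hx => x.1.insertIntoPart ha x.2 (mem_filter.1 (mem_sigma.1 hx).2).1) ?_ ?_ ?_ ?_
        · intro R hR
          have hcard := (R.restrict (subset_insert a t)).card_parts_insertIntoPart ha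
            R.part_inter_mem_insert_restrict
          rw [R.insertIntoPart_restrict ha, (mem_filter.1 hR).2] at hcard
          exact mem_sigma.2
            ⟨mem_univ _, mem_filter.2 ⟨R.part_inter_mem_insert_restrict, hcard.symm⟩⟩
        · intro x hx
          obtain ⟨hb, hcard⟩ := mem_filter.1 (mem_sigma.1 hx).2
          exact mem_filter.2 ⟨mem_univ _, (x.1.card_parts_insertIntoPart ha hb).trans hcard⟩
        · intro R _
          exact R.insertIntoPart_restrict ha
        · rintro ⟨Q, b⟩ _
          exact Sigma.ext (Q.restrict_insertIntoPart ha _)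
            (heq_of_eq (Q.part_insertIntoPart_inter ha _))
    _ = _ := by
      rw [card_sigma, sum_congr rfl fun Q _ => hcount Q, sum_add_distrib, card_filter,
        card_filter, mul_sum]
      congr 1
      exact sum_congr rfl fun Q _ => by split_ifs <;> simp

theorem card_filter_card_parts_eq_stirling2 (s : Finset α) (k : ℕ) :
    #{P : Finpartition s | #P.parts = k} = stirling2 #s k := by
  induction s using Finset.induction_on generalizing k with
  | empty =>
    have hparts (P : Finpartition (∅ : Finset α)) : #P.parts = 0 := by
      simp [parts_eq_empty_iff]
    have : Unique (Finpartition (∅ : Finset α)) :=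
      inferInstanceAs (Unique (Finpartition (⊥ : Finset α)))
    cases k <;> simp [hparts, stirling2]
  | insert a t ha ih =>
    rw [card_insert_of_notMem ha]
    cases k with
    | zero => simp [stirling2, (parts_nonempty _ (insert_ne_empty a t)).ne_empty]
    | succ k => rw [card_filter_card_parts_insert ha, ih, ih, stirling2]

end Finpartition

theorem bell_eq_sum_stirling2 (m : ℕ) : bell m = ∑ k ∈ range (m + 1), stirling2 m k := by
  rw [bell, Nat.card_eq_fintype_card, ← card_univ,
    card_eq_sum_card_fiberwise (f := fun P => #P.parts) fun P _ =>
      mem_range.2 (Nat.lt_succ_of_le (P.card_parts_le_card.trans_eq (card_fin m)))]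
  exact sum_congr rfl fun k _ => by
    rw [Finpartition.card_filter_card_parts_eq_stirling2, card_univ, Fintype.card_fin]

theorem Fin.val_succAbove {m : ℕ} (p : Fin (m + 1)) (j : Fin m) :
    (p.succAbove j : ℕ) = if (j : ℕ) < p then (j : ℕ) else j + 1 := by
  rw [Fin.succAbove]
  split_ifs <;> simp_all [Fin.lt_def]

open Equiv

section RunStarts

variable {n : ℕ} {π : Perm (Fin n)}

theorem isRunStart_iff_forall_pred_gt {ℓ : Fin n} :
    IsRunStart π ℓ ↔ ∀ k : Fin n, (k : ℕ) + 1 = ℓ → π ℓ < π k := by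
  constructor
  · rintro (hℓ | hlt) k hk
    · omega
    · obtain rfl : k = ⟨ℓ - 1, lt_of_le_of_lt (Nat.sub_le _ _) ℓ.isLt⟩ :=
        Fin.ext (show (k : ℕ) = ℓ - 1 by omega)
      exact hlt
  · intro h
    by_cases hℓ : (ℓ : ℕ) = 0
    · exact Or.inl hℓ
    · exact Or.inr (h _ (show (ℓ : ℕ) - 1 + 1 = ℓ by omega))

theorem Flattened.isRLMin_of_isRunStart (hπ : Flattened π) {s : Fin n}
    (hs : IsRunStart π s) : IsRLMin π s := by
  suffices ∀ k (hk : k < n), (s : ℕ) < k → π s < π ⟨k, hk⟩ from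
    fun j hj => this j j.2 hj
  intro k
  induction k with
  | zero => intro _ h; omega
  | succ k ih =>
    intro hk hsk
    by_cases hstart : IsRunStart π ⟨k + 1, hk⟩
    · exact hπ _ _ hs hstart hsk
    · obtain ⟨k', hk', hle⟩ :
          ∃ k' : Fin n, (k' : ℕ) + 1 = k + 1 ∧ π k' ≤ π ⟨k + 1, hk⟩ := by
        simpa [isRunStart_iff_forall_pred_gt] using hstart
      obtain rfl : k' = ⟨k, Nat.lt_of_succ_lt hk⟩ := Fin.ext (Nat.succ_injective hk')
      have hsk' : π s ≤ π ⟨k, Nat.lt_of_succ_lt hk⟩ := by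
        rcases Nat.lt_or_ge (s : ℕ) k with h | h
        · exact (ih _ h).le
        · exact le_of_eq (congrArg π (Fin.ext (show (s : ℕ) = k by omega)))
      exact lt_of_le_of_ne (hsk'.trans hle)
        fun h => ne_of_lt (show s < ⟨k + 1, hk⟩ from hsk) (π.injective h)

theorem flattened_iff_forall_isRunStart_imp_isRLMin :
    Flattened π ↔ ∀ ℓ, IsRunStart π ℓ → IsRLMin π ℓ :=
  ⟨fun hπ _ => hπ.isRLMin_of_isRunStart, fun h i j hi _ hij => h i hi j hij⟩

end RunStarts

section InsertMax

variable {m : ℕ}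

/-- The permutation whose one-line notation is that of `σ` with the new largest value
`Fin.last m` inserted at position `p`. -/
def insertMax (p : Fin (m + 1)) (σ : Perm (Fin m)) : Perm (Fin (m + 1)) :=
  (finSuccEquiv' p).trans ((Equiv.optionCongr σ).trans (finSuccEquiv' (Fin.last m)).symm)

variable (p : Fin (m + 1)) (σ : Perm (Fin m))

@[simp]
theorem insertMax_apply_self : insertMax p σ p = Fin.last m := by
  simp [insertMax]

@[simp]
theorem insertMax_apply_succAbove (j : Fin m) :
    insertMax p σ (p.succAbove j) = (σ j).castSucc := by
  simp [insertMax]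

theorem insertMax_uncurry_injective : Function.Injective (Function.uncurry (@insertMax m)) := by
  rintro ⟨p, σ⟩ ⟨p', σ'⟩ h
  simp only [Function.uncurry_apply_pair] at h
  obtain rfl : p = p' := (insertMax p σ).injective <| by
    rw [insertMax_apply_self, h, insertMax_apply_self]
  refine Prod.ext rfl (Equiv.ext fun j => Fin.castSucc_injective _ ?_)
  rw [← insertMax_apply_succAbove, ← insertMax_apply_succAbove, h]

theorem insertMax_uncurry_bijective : Function.Bijective (Function.uncurry (@insertMax m)) :=
  (Fintype.bijective_iff_injective_and_card _).2
    ⟨insertMax_uncurry_injective, by simp [Fintype.card_perm, Nat.factorial_succ]⟩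

theorem sum_perm_succ_eq_sum_insertMax {M : Type*} [AddCommMonoid M]
    (f : Perm (Fin (m + 1)) → M) : ∑ π, f π = ∑ σ, ∑ p, f (insertMax p σ) := by
  rw [← insertMax_uncurry_bijective.sum_comp, Fintype.sum_prod_type, Finset.sum_comm]
  rfl

theorem isRLMin_insertMax_self : IsRLMin (insertMax p σ) p ↔ p = Fin.last m := by
  simp only [IsRLMin, Fin.forall_iff_succAbove p, lt_self_iff_false, IsEmpty.forall_iff, true_and,
    insertMax_apply_self, insertMax_apply_succAbove, Fin.lt_succAbove_iff_le_castSucc]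
  constructor
  · intro h
    by_contra hp
    exact (h (p.castPred hp) (by simp)).not_gt (Fin.castSucc_lt_last _)
  · rintro rfl i hi
    exact absurd hi (Fin.castSucc_lt_last i).not_ge

theorem isRLMin_insertMax_succAbove (j : Fin m) :
    IsRLMin (insertMax p σ) (p.succAbove j) ↔ IsRLMin σ j := by
  simp [IsRLMin, Fin.forall_iff_succAbove p, Fin.succAbove_lt_succAbove_iff, Fin.castSucc_lt_last]

theorem isRunStart_insertMax_self : IsRunStart (insertMax p σ) p ↔ p = 0 := by
  have hlast : ∀ x : Fin m, ¬ Fin.last m < x.castSucc := fun x => (Fin.castSucc_lt_last x).not_gt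
  simp only [isRunStart_iff_forall_pred_gt, Fin.forall_iff_succAbove p, insertMax_apply_self,
    insertMax_apply_succAbove, hlast, imp_false, Nat.succ_ne_self, IsEmpty.forall_iff, true_and,
    Fin.val_succAbove, Fin.ext_iff, Fin.val_zero]
  constructor
  · intro h
    by_contra hp
    have := h ⟨p - 1, by omega⟩
    simp only at this
    split_ifs at this <;> omega
  · intro hp j
    split_ifs <;> omega

theorem isRunStart_insertMax_succAbove (j : Fin m) :
    IsRunStart (insertMax p σ) (p.succAbove j) ↔ IsRunStart σ j ∨ j.castSucc = p := by
  simp only [isRunStart_iff_forall_pred_gt, Fin.forall_iff_succAbove p, insertMax_apply_self,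
    insertMax_apply_succAbove, Fin.castSucc_lt_last, Fin.castSucc_lt_castSucc_iff, implies_true,
    true_and]
  by_cases hjp : j.castSucc = p
  · have hval : (j : ℕ) = p := by simpa [Fin.ext_iff] using hjp
    simp only [hjp, or_true, iff_true, Fin.val_succAbove]
    intro j' h
    split_ifs at h <;> omega
  · have hval : (j : ℕ) ≠ p := by simpa [Fin.ext_iff] using hjp
    simp only [hjp, or_false, Fin.val_succAbove]
    refine forall_congr' fun j' => imp_congr_left ?_
    split_ifs <;> omega

theorem flattened_insertMax_iff :
    Flattened (insertMax p σ) ↔ (p = 0 → p = Fin.last m) ∧ Flattened σ ∧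
      ∀ j : Fin m, j.castSucc = p → IsRLMin σ j := by
  simp only [flattened_iff_forall_isRunStart_imp_isRLMin, Fin.forall_iff_succAbove p,
    isRunStart_insertMax_self, isRLMin_insertMax_self, isRunStart_insertMax_succAbove,
    isRLMin_insertMax_succAbove, or_imp, forall_and]

theorem flattened_insertMax_last : Flattened (insertMax (Fin.last m) σ) ↔ Flattened σ := by
  simp [flattened_insertMax_iff, Fin.castSucc_ne_last]

theorem flattened_insertMax_castSucc (j : Fin m) :
    Flattened (insertMax j.castSucc σ) ↔ Flattened σ ∧ (j : ℕ) ≠ 0 ∧ IsRLMin σ j := by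
  have hzero : j.castSucc = 0 ↔ (j : ℕ) = 0 := by simp [Fin.ext_iff]
  rw [flattened_insertMax_iff]
  simp only [Fin.castSucc_inj, forall_eq, hzero, Fin.castSucc_ne_last, imp_false]
  tauto

end InsertMax

section Counting

open scoped Classical

theorem rlmCount_eq_sum_boole {n : ℕ} (π : Perm (Fin n)) :
    rlmCount π = ∑ i, if IsRLMin π i then 1 else 0 := by
  rw [rlmCount, Set.ncard_eq_toFinset_card', Set.toFinset_ofPred, Finset.card_filter]

theorem rlmCount_pos {m : ℕ} (π : Perm (Fin (m + 1))) : 0 < rlmCount π :=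
  (Set.ncard_pos (Set.toFinite _)).2 ⟨Fin.last m, fun j hj => absurd hj (Fin.le_last j).not_gt⟩

theorem rlmCount_le {n : ℕ} (π : Perm (Fin n)) : rlmCount π ≤ n := by
  rw [rlmCount]
  simpa using Set.ncard_le_ncard (Set.subset_univ {i | IsRLMin π i})

variable {m : ℕ}

theorem rlmCount_insertMax (p : Fin (m + 1)) (σ : Perm (Fin m)) :
    rlmCount (insertMax p σ) = rlmCount σ + if p = Fin.last m then 1 else 0 := by
  rw [rlmCount_eq_sum_boole, rlmCount_eq_sum_boole, Fin.sum_univ_succAbove _ p]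
  simp [isRLMin_insertMax_self, isRLMin_insertMax_succAbove, add_comm]

theorem Flattened.card_isRLMin_ne_zero {σ : Perm (Fin m)} (hσ : Flattened σ) :
    #{j : Fin m | (j : ℕ) ≠ 0 ∧ IsRLMin σ j} = rlmCount σ - 1 := by
  rw [rlmCount_eq_sum_boole, card_filter]
  cases m with
  | zero => simp
  | succ m =>
    rw [Fin.sum_univ_succ, Fin.sum_univ_succ, if_pos (hσ.isRLMin_of_isRunStart (Or.inl rfl))]
    simp

theorem sum_boole_flattened_insertMax (σ : Perm (Fin m)) (r : ℕ) :
    (∑ p, if Flattened (insertMax p σ) ∧ rlmCount (insertMax p σ) = r + 1 then 1 else 0) =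
      (if Flattened σ ∧ rlmCount σ = r + 1 then r else 0) +
        if Flattened σ ∧ rlmCount σ = r then 1 else 0 := by
  rw [Fin.sum_univ_castSucc]
  congr 1
  · split_ifs with hσ
    · calc _ = #{j : Fin m | (j : ℕ) ≠ 0 ∧ IsRLMin σ j} := by
            rw [card_filter]
            refine sum_congr rfl fun j _ => if_congr ?_ rfl rfl
            simp [flattened_insertMax_castSucc, rlmCount_insertMax, hσ.1, hσ.2,
              Fin.castSucc_ne_last]
        _ = r := by rw [hσ.1.card_isRLMin_ne_zero, hσ.2, Nat.add_sub_cancel]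
    · refine sum_eq_zero fun j _ => if_neg fun h => hσ ⟨?_, ?_⟩
      · exact ((flattened_insertMax_castSucc _ _).1 h.1).1
      · simpa [rlmCount_insertMax, Fin.castSucc_ne_last] using h.2
  · simp [flattened_insertMax_last, rlmCount_insertMax]

noncomputable def flatCount (m r : ℕ) : ℕ :=
  #{σ : Perm (Fin m) | Flattened σ ∧ rlmCount σ = r}

theorem flatCount_zero (r : ℕ) : flatCount 0 r = if r = 0 then 1 else 0 := by
  have h (σ : Perm (Fin 0)) : Flattened σ ∧ rlmCount σ = 0 :=
    ⟨fun i => i.elim0, by simp [rlmCount_eq_sum_boole]⟩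
  rcases eq_or_ne r 0 with rfl | hr
  · simp [flatCount, h]
  · simp [flatCount, h, hr.symm, hr]

theorem flatCount_succ_zero (m : ℕ) : flatCount (m + 1) 0 = 0 := by
  simp [flatCount, (rlmCount_pos _).ne']

theorem flatCount_succ_succ (m r : ℕ) :
    flatCount (m + 1) (r + 1) = r * flatCount m (r + 1) + flatCount m r := by
  simp only [flatCount, card_filter, sum_perm_succ_eq_sum_insertMax, sum_boole_flattened_insertMax,
    sum_add_distrib, mul_sum]
  congr 1
  exact sum_congr rfl fun σ _ => by split_ifs <;> simp

theorem flatCount_succ_succ_eq_stirling2 (m r : ℕ) :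
    flatCount (m + 1) (r + 1) = stirling2 m r := by
  induction m generalizing r with
  | zero => cases r <;> simp [flatCount_succ_succ, flatCount_zero, stirling2]
  | succ m ih =>
    cases r with
    | zero => simp [flatCount_succ_succ, flatCount_succ_zero, stirling2]
    | succ r => rw [flatCount_succ_succ, ih, ih, stirling2]

theorem sum_rlmCount_flattened (m : ℕ) :
    ∑ π ∈ univ.filter (fun π : Perm (Fin (m + 1)) => Flattened π), rlmCount π =
      ∑ r ∈ range (m + 1), (r + 1) * stirling2 m r := by
  have hfiber (k : ℕ) :
      ∑ π ∈ univ.filter (fun π : Perm (Fin (m + 1)) => Flattened π ∧ rlmCount π = k),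
        rlmCount π = k * flatCount (m + 1) k := by
    rw [sum_const_nat fun π hπ => (mem_filter.1 hπ).2.2, mul_comm, flatCount]
  rw [← sum_fiberwise_of_maps_to (g := rlmCount) (t := range (m + 2))
    fun π _ => mem_range.2 (Nat.lt_succ_of_le (rlmCount_le π)), sum_range_succ']
  simp only [filter_filter, hfiber, flatCount_succ_succ_eq_stirling2, zero_mul, add_zero]

end Counting

open scoped Classical in
theorem flattened_rlm_popularity (n : ℕ) (hn : 1 ≤ n) :
    (∑ π ∈ Finset.univ.filter (fun π : Equiv.Perm (Fin n) => Flattened π), rlmCount π =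
      ∑ k ∈ Finset.Icc 1 n, k * stirling2 (n - 1) (k - 1)) ∧
    (∑ k ∈ Finset.Icc 1 n, k * stirling2 (n - 1) (k - 1) =
      bell (n - 1) + ∑ k ∈ Finset.range n, k * stirling2 (n - 1) k) := by
  obtain ⟨m, rfl⟩ : ∃ m, n = m + 1 := ⟨n - 1, by omega⟩
  have hshift : ∑ k ∈ Icc 1 (m + 1), k * stirling2 (m + 1 - 1) (k - 1) =
      ∑ r ∈ range (m + 1), (r + 1) * stirling2 m r := by
    rw [Nat.add_sub_cancel, ← Ico_add_one_right_eq_Icc, sum_Ico_eq_sum_range]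
    simp [add_comm]
  refine ⟨(sum_rlmCount_flattened m).trans hshift.symm, ?_⟩
  rw [hshift, Nat.add_sub_cancel, bell_eq_sum_stirling2, ← sum_add_distrib]
  exact sum_congr rfl fun r _ => by ring
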